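/- Let i_* : A → B be a faithful exact functor between Grothendieck categories with enough projectives, admitting a left adjoint i^* and a right adjoint i^!. Suppose B is Gorenstein, and that on the full subcategory FD(B) of objects of finite projective dimension there is an equivalence Φ : A ≃ A with i^*|_{FD(B)} a retract of a product of copies of (Φ ∘ i^!)|_{FD(B)} and (Φ ∘ i^!)|_{FD(B)} a retract of a coproduct of copies of i^*|_{FD(B)}. Then both i^* and i^! preserve injective objects and projective objects and are exact when restricted to FD(B). -/

import Mathlib

open CategoryTheory CategoryTheory.Limits

universe v u u'

namespace Stmt3

variable {A : Type u} [Category.{v} A] [Abelian A]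

/-- `PdimLE n M` : `M` has projective dimension at most `n`. -/
def PdimLE : ℕ → A → Prop
  | 0, M => Projective M
  | n + 1, M => Projective M ∨
      ∃ (K P : A) (i : K ⟶ P) (p : P ⟶ M) (w : i ≫ p = 0),
        Projective P ∧ (ShortComplex.mk i p w).ShortExact ∧ PdimLE n K

/-- `IdimLE n M` : `M` has injective dimension at most `n`. -/
def IdimLE : ℕ → A → Prop
  | 0, M => Injective M
  | n + 1, M => Injective M ∨
      ∃ (I K : A) (i : M ⟶ I) (p : I ⟶ K) (w : i ≫ p = 0),
        Injective I ∧ (ShortComplex.mk i p w).ShortExact ∧ IdimLE n K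

def FinPdim (M : A) : Prop := ∃ n, PdimLE n M

def FinIdim (M : A) : Prop := ∃ n, IdimLE n M

variable (A)

/-- The full subcategory of objects of finite projective dimension. -/
abbrev FD := ObjectProperty.FullSubcategory (fun X : A => FinPdim X)

/-- The inclusion of the subcategory of objects of finite projective dimension. -/
abbrev fdι : FD A ⥤ A := ObjectProperty.ι _

/-- Gorenstein abelian category. -/
def IsGorenstein : Prop :=
  (∀ M : A, FinPdim M ↔ FinIdim M) ∧
  (∃ n : ℕ, (∀ M : A, FinPdim M → PdimLE n M) ∧ (∀ M : A, FinIdim M → IdimLE n M)) ∧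
  (∃ G : A, IsSeparator G ∧ FinPdim G)

variable {A}

/-- `F` is a retract of `G` in a functor category. -/
def IsFunctorRetract {D : Type u'} [Category.{v} D] (F G : D ⥤ A) : Prop :=
  ∃ (σ : F ⟶ G) (ρ : G ⟶ F), σ ≫ ρ = 𝟙 F

/-- The product of `I` copies of a functor `G`. -/
noncomputable abbrev piPow {D : Type u'} [Category.{v} D] (I : Type v) [HasLimits A]
    (G : D ⥤ A) : D ⥤ A :=
  G ⋙ Functor.const (Discrete I) ⋙ lim

/-- The coproduct of `I` copies of a functor `G`. -/
noncomputable abbrev sigmaPow {D : Type u'} [Category.{v} D] (I : Type v) [HasColimits A]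
    (G : D ⥤ A) : D ⥤ A :=
  G ⋙ Functor.const (Discrete I) ⋙ colim

/-- The *Gorenstein transfer property* for a pair of functors `i^*, i^! : B ⥤ A`
(the left and right adjoints of some `i_* : A ⥤ B`): restricted to the full subcategory
`FD B` of objects of `B` of finite projective dimension, there is a self-equivalence `Φ`
of `A` such that `i^*|_FD` is a retract of a product of copies of `(Φ ∘ i^!)|_FD` and
`(Φ ∘ i^!)|_FD` is a retract of a coproduct of copies of `i^*|_FD`. -/
def GTProperty {B : Type u} [Category.{v} B] [Abelian B]
    [HasLimits A] [HasColimits A] (iStar iBang : B ⥤ A) : Prop :=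
  ∃ Φ : A ≌ A,
    (∃ I : Type v,
      IsFunctorRetract (fdι B ⋙ iStar) (piPow I (fdι B ⋙ iBang ⋙ Φ.functor))) ∧
    (∃ I : Type v,
      IsFunctorRetract (fdι B ⋙ iBang ⋙ Φ.functor) (sigmaPow I (fdι B ⋙ iStar)))

end Stmt3

open Stmt3

/-!
Since `i^* ⊣ i_* ⊣ i^!`, the functor `i_*` preserves monomorphisms and epimorphisms, so `i^!`
preserves injectives and is left exact while `i^*` preserves projectives and is right exact.
The transfer property supplies the missing halves. Products of injectives are injective and
products of monomorphisms are monomorphisms, and both properties pass to retracts; hence the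
retract `i^* ⊆ ∏ Φ i^!` on `FD(B)` shows that `i^*` sends injectives (which lie in `FD(B)` since
`B` is Gorenstein) to injectives and monomorphisms of `FD(B)` to monomorphisms. Dually, the
retract `Φ i^! ⊆ ∐ i^*` does the same for projectives and epimorphisms under `i^!`.
-/

namespace Stmt3.IsFunctorRetract

variable {A : Type u} [Category.{v} A] {D : Type u'} [Category.{v} D] {F G : D ⥤ A}

lemma nonempty_retract_obj (h : IsFunctorRetract F G) (X : D) :
    Nonempty (Retract (F.obj X) (G.obj X)) :=
  let ⟨σ, ρ, hσρ⟩ := h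
  ⟨Retract.map ⟨σ, ρ, hσρ⟩ ((evaluation D A).obj X)⟩

lemma nonempty_retractArrow_map (h : IsFunctorRetract F G) {X Y : D} (f : X ⟶ Y) :
    Nonempty (RetractArrow (F.map f) (G.map f)) :=
  let ⟨σ, ρ, hσρ⟩ := h
  ⟨Retract.map ⟨σ, ρ, hσρ⟩ (Functor.mapArrowFunctor D A ⋙ (evaluation _ _).obj (Arrow.mk f))⟩

lemma injective_obj (h : IsFunctorRetract F G) (X : D) (hX : Injective (G.obj X)) :
    Injective (F.obj X) :=
  (h.nonempty_retract_obj X).some.injective (i := hX)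

lemma projective_obj (h : IsFunctorRetract F G) (X : D) (hX : Projective (G.obj X)) :
    Projective (F.obj X) :=
  (h.nonempty_retract_obj X).some.projective (p := hX)

lemma mono_map (h : IsFunctorRetract F G) {X Y : D} (f : X ⟶ Y) (hf : Mono (G.map f)) :
    Mono (F.map f) :=
  MorphismProperty.of_retract (P := .monomorphisms A) (h.nonempty_retractArrow_map f).some hf

lemma epi_map (h : IsFunctorRetract F G) {X Y : D} (f : X ⟶ Y) (hf : Epi (G.map f)) :
    Epi (F.map f) :=
  MorphismProperty.of_retract (P := .epimorphisms A) (h.nonempty_retractArrow_map f).some hf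

end Stmt3.IsFunctorRetract

namespace Stmt3

variable {A : Type u} [Category.{v} A] {D : Type u'} [Category.{v} D] (I : Type v) (G : D ⥤ A)

lemma injective_piPow_obj [HasLimits A] (X : D) (hX : Injective (G.obj X)) :
    Injective ((piPow I G).obj X) :=
  Injective.of_iso (HasLimit.isoOfNatIso (G := Discrete.functor fun _ : I => G.obj X)
    (Discrete.natIso fun _ => Iso.refl (G.obj X))).symm inferInstance

lemma projective_sigmaPow_obj [HasColimits A] (X : D) (hX : Projective (G.obj X)) :
    Projective ((sigmaPow I G).obj X) :=
  Projective.of_iso (HasColimit.isoOfNatIso (G := Discrete.functor fun _ : I => G.obj X)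
    (Discrete.natIso fun _ => Iso.refl (G.obj X))).symm inferInstance

lemma mono_piPow_map [HasLimits A] {X Y : D} (f : X ⟶ Y) (hf : Mono (G.map f)) :
    Mono ((piPow I G).map f) := by
  have : Mono ((Functor.const (Discrete I)).map (G.map f)) := NatTrans.mono_of_mono_app _
  exact lim.map_mono _

lemma epi_sigmaPow_map [HasColimits A] {X Y : D} (f : X ⟶ Y) (hf : Epi (G.map f)) :
    Epi ((sigmaPow I G).map f) := by
  have : Epi ((Functor.const (Discrete I)).map (G.map f)) := NatTrans.epi_of_epi_app _
  exact colim.map_epi _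

end Stmt3

namespace CategoryTheory.Adjunction

variable {C D : Type*} [Category C] [Category D] [Abelian C] [Abelian D] {F : C ⥤ D} {G : D ⥤ C}
  {S : ShortComplex C}

lemma shortExact_map_of_mono_map_f [F.PreservesZeroMorphisms] (adj : F ⊣ G) (hS : S.ShortExact)
    (hf : Mono (F.map S.f)) : (S.map F).ShortExact :=
  have := hS.epi_g
  have := adj.leftAdjoint_preservesColimits
  { exact := hS.exact.map_of_epi_of_preservesCokernel F hS.epi_g inferInstance
    mono_f := hf
    epi_g := (Functor.preservesEpimorphisms_of_adjunction adj).preserves S.g }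

lemma shortExact_map_of_epi_map_g [G.PreservesZeroMorphisms] (adj : F ⊣ G) {S : ShortComplex D}
    (hS : S.ShortExact) (hg : Epi (G.map S.g)) : (S.map G).ShortExact :=
  have := hS.mono_f
  have := adj.rightAdjoint_preservesLimits
  { exact := hS.exact.map_of_mono_of_preservesKernel G hS.mono_f inferInstance
    mono_f := (Functor.preservesMonomorphisms_of_adjunction adj).preserves S.f
    epi_g := hg }

end CategoryTheory.Adjunction

theorem adjoints_preserve_inj_proj_and_exact_on_FD_general
    {A B : Type u} [Category.{v} A] [Category.{v} B] [Abelian A] [Abelian B]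
    [HasLimits A] [HasColimits A]
    (iLow : A ⥤ B)
    (iStar iBang : B ⥤ A) [iStar.Additive] [iBang.Additive]
    (adj₁ : iStar ⊣ iLow) (adj₂ : iLow ⊣ iBang)
    (hGT : GTProperty iStar iBang) (hGor : IsGorenstein B) :
    (∀ X : B, Injective X → Injective (iStar.obj X) ∧ Injective (iBang.obj X)) ∧
    (∀ X : B, Projective X → Projective (iStar.obj X) ∧ Projective (iBang.obj X)) ∧
    (∀ S : ShortComplex B, S.ShortExact →
      FinPdim S.X₁ → FinPdim S.X₂ → FinPdim S.X₃ →
      (S.map iStar).ShortExact ∧ (S.map iBang).ShortExact) := by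
  obtain ⟨Φ, ⟨I, hStar⟩, ⟨J, hBang⟩⟩ := hGT
  have := Functor.preservesMonomorphisms_of_adjunction adj₁
  have := Functor.preservesEpimorphisms_of_adjunction adj₂
  have injective_iBang (X : B) (_ : Injective X) : Injective (iBang.obj X) :=
    Injective.injective_of_adjoint adj₂ X
  have projective_iStar (X : B) (hX : Projective X) : Projective (iStar.obj X) :=
    adj₁.map_projective X hX
  refine ⟨fun X hX => ⟨?_, injective_iBang X hX⟩, fun X hX => ⟨projective_iStar X hX, ?_⟩,
    fun S hS h₁ h₂ h₃ => ⟨?_, ?_⟩⟩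
  · exact hStar.injective_obj ⟨X, (hGor.1 X).2 ⟨0, hX⟩⟩ <| injective_piPow_obj _ _ _ <|
      (Φ.map_injective_iff _).2 (injective_iBang X hX)
  · exact (Φ.map_projective_iff _).1 <| hBang.projective_obj ⟨X, 0, hX⟩ <|
      projective_sigmaPow_obj _ _ _ (projective_iStar X hX)
  · have := hS.mono_f
    have := (Functor.preservesMonomorphisms_of_adjunction adj₂).preserves S.f
    let f : (⟨_, h₁⟩ : FD B) ⟶ ⟨_, h₂⟩ := ObjectProperty.homMk S.f
    exact adj₁.shortExact_map_of_mono_map_f hS <| hStar.mono_map f <| mono_piPow_map _ _ f <|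
      Φ.functor.map_mono (iBang.map S.f)
  · have := hS.epi_g
    let g : (⟨_, h₂⟩ : FD B) ⟶ ⟨_, h₃⟩ := ObjectProperty.homMk S.g
    exact adj₂.shortExact_map_of_epi_map_g hS <| Φ.functor.epi_of_epi_map <| hBang.epi_map g <|
      epi_sigmaPow_map _ _ g ((Functor.preservesEpimorphisms_of_adjunction adj₁).preserves S.g)

/-- Let `i_* : A ⥤ B` be a faithful exact functor between Grothendieck
categories with enough projectives, with left adjoint `i^*` and right adjoint `i^!`,
satisfying the Gorenstein transfer property, and let `B` be Gorenstein.  Then `i^*` and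
`i^!` preserve injective objects and projective objects, and are exact on the subcategory
of objects of finite projective dimension (they send short exact sequences with all terms
of finite projective dimension to short exact sequences). -/
theorem adjoints_preserve_inj_proj_and_exact_on_FD
    {A B : Type u} [Category.{v} A] [Category.{v} B] [Abelian A] [Abelian B]
    [HasLimits A] [HasColimits A] [HasFilteredColimits A] [AB5 A] [HasSeparator A]
    [EnoughProjectives A]
    [HasLimits B] [HasColimits B] [HasFilteredColimits B] [AB5 B] [HasSeparator B]
    [EnoughProjectives B]
    (iLow : A ⥤ B) [iLow.Additive] [iLow.Faithful]
    [PreservesFiniteLimits iLow] [PreservesFiniteColimits iLow]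
    (iStar iBang : B ⥤ A) [iStar.Additive] [iBang.Additive]
    (adj₁ : iStar ⊣ iLow) (adj₂ : iLow ⊣ iBang)
    (hGT : GTProperty iStar iBang) (hGor : IsGorenstein B) :
    (∀ X : B, Injective X → Injective (iStar.obj X) ∧ Injective (iBang.obj X)) ∧
    (∀ X : B, Projective X → Projective (iStar.obj X) ∧ Projective (iBang.obj X)) ∧
    (∀ S : ShortComplex B, S.ShortExact →
      FinPdim S.X₁ → FinPdim S.X₂ → FinPdim S.X₃ →
      (S.map iStar).ShortExact ∧ (S.map iBang).ShortExact) :=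
  adjoints_preserve_inj_proj_and_exact_on_FD_general iLow iStar iBang adj₁ adj₂ hGT hGor
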